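/- arXiv:1811.12342 — 6 statements merged into one kernel-verified Lean document; each statement's English description precedes it below -/
import Mathlib

section
/- For all integers n ≥ 0 and real l > 1, the identity ∑_{k=0}^{n} C(n,k) (k−1) (l+n−1)^{n−k−1} = −l (l+n−1)^{−1} (l+n)^{n−1} holds. -/
/-!
With `x = l + n - 1`, so that `x + 1 = l + n`, the sum is `x⁻¹ ∑ C(n,k) (k - 1) x^(n-k)`.
Splitting `k - 1`, the binomial theorem and its derivative `∑ C(n,k) k x^(n-k) = n (x+1)^(n-1)`
give `(n - (x + 1)) (x + 1)^(n-1) = -l (l + n)^(n-1)`.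
-/

open Finset

theorem sum_range_choose_mul_mul_pow {R : Type*} [CommSemiring R] (n : ℕ) (x : R) :
    ∑ k ∈ range (n + 1), (n.choose k : R) * k * x ^ (n - k) = n * (x + 1) ^ (n - 1) := by
  cases n with
  | zero => simp
  | succ m =>
    have hterm : ∀ j ∈ range (m + 1),
        ((m + 1).choose (j + 1) : R) * (j + 1 : ℕ) * x ^ (m + 1 - (j + 1))
          = (m + 1) * (x ^ (m - j) * (m.choose j : R)) := by
      intro j _
      rw [Nat.succ_sub_succ, ← Nat.cast_mul, ← Nat.add_one_mul_choose_eq]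
      push_cast
      ring
    rw [sum_range_succ', sum_congr rfl hterm, ← mul_sum, add_comm x, add_pow]
    simp

theorem mul_sum_range_choose_mul_sub_one_mul_pow {R : Type*} [CommRing R] (n : ℕ) (x : R) :
    (x + 1) * ∑ k ∈ range (n + 1), (n.choose k : R) * (k - 1) * x ^ (n - k)
      = (n - (x + 1)) * (x + 1) ^ n := by
  have hbinom : ∑ k ∈ range (n + 1), (n.choose k : R) * x ^ (n - k) = (x + 1) ^ n := by
    rw [add_comm x, add_pow]
    exact sum_congr rfl fun k _ => by ring
  simp only [mul_sub, sub_mul, mul_one, sum_sub_distrib, sum_range_choose_mul_mul_pow, hbinom]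
  cases n with
  | zero => simp
  | succ m => simp only [Nat.cast_add, Nat.cast_one, add_tsub_cancel_right, pow_succ]; ring

theorem sum_range_choose_mul_sub_one_mul_zpow {K : Type*} [Field K] (n : ℕ) {x : K}
    (hx : x ≠ 0) (hx1 : x + 1 ≠ 0) :
    ∑ k ∈ range (n + 1), (n.choose k : K) * (k - 1) * x ^ ((n : ℤ) - k - 1)
      = (n - (x + 1)) * x⁻¹ * (x + 1) ^ ((n : ℤ) - 1) := by
  have hterm : ∀ k ∈ range (n + 1),
      (n.choose k : K) * (k - 1) * x ^ ((n : ℤ) - k - 1)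
        = (n.choose k : K) * (k - 1) * x ^ (n - k) * x⁻¹ := by
    intro k hk
    rw [← Nat.cast_sub (mem_range_succ_iff.mp hk), zpow_sub_one₀ hx, zpow_natCast,
      mul_assoc _ _ x⁻¹]
  rw [sum_congr rfl hterm, ← sum_mul, zpow_sub_one₀ hx1, zpow_natCast]
  have h := mul_sum_range_choose_mul_sub_one_mul_pow n x
  field_simp
  linear_combination h

theorem stmt_0 (n : ℕ) (l : ℝ) (hl : 1 < l) :
    ∑ k ∈ Finset.range (n + 1),
        (n.choose k : ℝ) * ((k : ℝ) - 1) * (l + n - 1) ^ ((n : ℤ) - k - 1)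
      = -l * (l + n - 1)⁻¹ * (l + n) ^ ((n : ℤ) - 1) := by
  have hx : 0 < l + n - 1 := by linarith [(n.cast_nonneg : (0 : ℝ) ≤ n)]
  have key := sum_range_choose_mul_sub_one_mul_zpow n hx.ne' (by linarith)
  rwa [sub_add_cancel, show (n : ℝ) - (l + n) = -l by ring] at key
end

section
/- For m ≥ 2, the sum over all partitions {I_1,…,I_σ} of {1,…,m} into σ nonempty blocks with 1 ∈ I_1 of the product ∏_{j=1}^{σ} (∑_{i∈I_j} l_i)^{|I_j|−1} equals C(m−1, σ−1) · l^{m−σ}, where l = l_1 + ⋯ + l_m and 2 ≤ σ ≤ m, for any positive reals l_1,…,l_m. -/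
/-!
Write `s_B = ∑_{i ∈ B} l i`. Both sides are the coefficient of `y^σ` in
`∑_P y^{|P|} ∏_{B ∈ P} s_B^{|B|-1} = y (y + s_S)^{|S|-1}`, the sum running over all partitions
`P` of `S`.
Splitting off the block `insert x A` of a fixed `x ∈ S` reduces this, by induction on `S`,
to Hurwitz's generalisation of Abel's identity
`∑_{A ⊆ T} (x + s_A)^{|A|} y (y + s_{T∖A})^{|T∖A|-1} = (x + y + s_T)^{|T|}`,
whose two sides agree at `y = 0` and, by induction on `T`, have the same derivative in `y`.
-/

/-- The finset of (unordered) partitions of `S` into exactly `σ` nonempty,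
pairwise disjoint blocks. -/
def setPartitions (m : ℕ) (S : Finset (Fin m)) (σ : ℕ) :
    Finset (Finset (Finset (Fin m))) :=
  Finset.univ.filter (fun P : Finset (Finset (Fin m)) =>
    P.card = σ ∧ (∀ B ∈ P, B.Nonempty) ∧
      (∀ B ∈ P, ∀ B' ∈ P, B ≠ B' → Disjoint B B') ∧ P.sup id = S)

open Finset

section

variable {ι : Type*} [DecidableEq ι] {S B : Finset ι} {P Q : Finset (Finset ι)} {x : ι}

def IsSetPartition (S : Finset ι) (P : Finset (Finset ι)) : Prop :=
  (∀ B ∈ P, B.Nonempty) ∧ (∀ B ∈ P, ∀ B' ∈ P, B ≠ B' → Disjoint B B') ∧ P.sup id = S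

instance (S : Finset ι) : DecidablePred (IsSetPartition S) := fun _ => by
  unfold IsSetPartition; infer_instance

def partitionsOf (S : Finset ι) : Finset (Finset (Finset ι)) :=
  S.powerset.powerset.filter (IsSetPartition S)

namespace IsSetPartition

theorem subset (h : IsSetPartition S P) (hB : B ∈ P) : B ⊆ S :=
  h.2.2 ▸ le_sup (f := id) hB

theorem exists_mem (h : IsSetPartition S P) (hx : x ∈ S) : ∃ B ∈ P, x ∈ B :=
  mem_sup.1 (h.2.2.symm ▸ hx : x ∈ P.sup id)

theorem eq_of_mem {B' : Finset ι} (h : IsSetPartition S P) (hB : B ∈ P) (hB' : B' ∈ P)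
    (hxB : x ∈ B) (hxB' : x ∈ B') : B = B' :=
  by_contra fun hne => disjoint_left.1 (h.2.1 B hB B' hB' hne) hxB hxB'

theorem notMem_of_nonempty (h : IsSetPartition (S \ B) Q) (hB : B.Nonempty) : B ∉ Q := by
  intro hBQ
  obtain ⟨x, hx⟩ := hB
  exact (mem_sdiff.1 (h.subset hBQ hx)).2 hx

theorem erase (h : IsSetPartition S P) (hB : B ∈ P) : IsSetPartition (S \ B) (P.erase B) := by
  obtain ⟨hne, hdisj, hsup⟩ := h
  refine ⟨fun B' hB' => hne B' (mem_of_mem_erase hB'),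
    fun B' hB' B'' hB'' => hdisj B' (mem_of_mem_erase hB') B'' (mem_of_mem_erase hB''), ?_⟩
  have hS : B ∪ (P.erase B).sup id = S := by
    rw [← hsup, ← insert_erase hB, sup_insert, erase_insert (notMem_erase B P), id,
      sup_eq_union]
  have hdisjB : Disjoint B ((P.erase B).sup id) := Finset.disjoint_sup_right.2 fun B' hB' =>
    hdisj B hB B' (mem_of_mem_erase hB') (ne_of_mem_erase hB').symm
  rw [← hS, union_sdiff_left, sdiff_eq_self_of_disjoint hdisjB.symm]

theorem insert (h : IsSetPartition (S \ B) Q) (hB : B.Nonempty) (hBS : B ⊆ S) :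
    IsSetPartition S (insert B Q) := by
  obtain ⟨hne, hdisj, hsup⟩ := h
  have hdisjB : ∀ B' ∈ Q, Disjoint B B' := fun B' hB' =>
    disjoint_of_subset_right (hsup ▸ le_sup (f := id) hB') disjoint_sdiff
  refine ⟨(forall_mem_insert _ _ _).2 ⟨hB, hne⟩, ?_, ?_⟩
  · simp only [mem_insert]
    rintro B₁ (rfl | hB₁) B₂ (rfl | hB₂) hne'
    · exact absurd rfl hne'
    · exact hdisjB B₂ hB₂
    · exact (hdisjB B₁ hB₁).symm
    · exact hdisj B₁ hB₁ B₂ hB₂ hne'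
  · rw [sup_insert, hsup, id, sup_eq_union, union_sdiff_of_subset hBS]

end IsSetPartition

theorem mem_partitionsOf : P ∈ partitionsOf S ↔ IsSetPartition S P :=
  mem_filter.trans
    ⟨And.right, fun h => ⟨mem_powerset.2 fun _ hB => mem_powerset.2 (h.subset hB), h⟩⟩

theorem partitionsOf_empty : partitionsOf (∅ : Finset ι) = {∅} := by
  ext P
  rw [mem_partitionsOf, mem_singleton]
  refine ⟨fun h => eq_empty_of_forall_notMem fun B hB => ?_, ?_⟩
  · obtain ⟨x, hx⟩ := h.1 B hB
    exact notMem_empty x (h.subset hB hx)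
  · rintro rfl
    simp [IsSetPartition]

variable {M : Type*} [AddCommMonoid M]

theorem sum_partitionsOf_filter_mem (hB : B.Nonempty) (hBS : B ⊆ S)
    (f : Finset (Finset ι) → M) :
    ∑ P ∈ partitionsOf S with B ∈ P, f P = ∑ Q ∈ partitionsOf (S \ B), f (insert B Q) := by
  refine sum_nbij' (fun P => P.erase B) (insert B) ?_ ?_ ?_ ?_ ?_
  · intro P hP
    simp only [mem_filter, mem_partitionsOf] at hP ⊢
    exact hP.1.erase hP.2
  · intro Q hQ
    simp only [mem_filter, mem_partitionsOf] at hQ ⊢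
    exact ⟨hQ.insert hB hBS, mem_insert_self B Q⟩
  · intro P hP
    exact insert_erase (mem_filter.1 hP).2
  · intro Q hQ
    exact erase_insert ((mem_partitionsOf.1 hQ).notMem_of_nonempty hB)
  · intro P hP
    rw [insert_erase (mem_filter.1 hP).2]

theorem sum_partitionsOf_eq_sum_powerset (hx : x ∈ S) (f : Finset (Finset ι) → M) :
    ∑ P ∈ partitionsOf S, f P =
      ∑ A ∈ (S.erase x).powerset,
        ∑ Q ∈ partitionsOf (S.erase x \ A), f (insert (insert x A) Q) := by
  have hblock : ∀ P ∈ partitionsOf S,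
      ∑ A ∈ (S.erase x).powerset, (if insert x A ∈ P then f P else 0) = f P := by
    intro P hP
    have hP := mem_partitionsOf.1 hP
    obtain ⟨B, hBP, hxB⟩ := hP.exists_mem hx
    rw [sum_eq_single_of_mem (B.erase x) (mem_powerset.2 (erase_subset_erase x (hP.subset hBP))),
      insert_erase hxB, if_pos hBP]
    intro A hA hAB
    refine if_neg fun hAP => hAB ?_
    rw [← hP.eq_of_mem hAP hBP (mem_insert_self x A) hxB,
      erase_insert fun hxA => notMem_erase x S (mem_powerset.1 hA hxA)]
  calc ∑ P ∈ partitionsOf S, f P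
      = ∑ A ∈ (S.erase x).powerset, ∑ P ∈ partitionsOf S with insert x A ∈ P, f P := by
        rw [← sum_congr rfl hblock, sum_comm]
        simp only [sum_filter]
    _ = _ := sum_congr rfl fun A hA => by
        rw [sum_partitionsOf_filter_mem (insert_nonempty x A)
          (insert_subset hx ((mem_powerset.1 hA).trans (erase_subset x S))), sdiff_insert,
          erase_sdiff_comm]

variable (l : ι → ℝ)

/-- The value `1` at `C = ∅` is what makes Hurwitz's identity hold for the term `A = T`. -/
noncomputable def abelPoly (y : ℝ) (C : Finset ι) : ℝ :=
  if C = ∅ then 1 else y * (y + ∑ i ∈ C, l i) ^ (#C - 1)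

theorem abelPoly_erase {C : Finset ι} {z : ι} (hz : z ∈ C) (hC : 2 ≤ #C) (y : ℝ) :
    abelPoly l (y + l z) (C.erase z) = (y + l z) * (y + ∑ i ∈ C, l i) ^ (#C - 2) := by
  have hne : C.erase z ≠ ∅ := by
    rw [← nonempty_iff_ne_empty, ← card_pos, card_erase_of_mem hz]
    omega
  rw [abelPoly, if_neg hne, card_erase_of_mem hz, add_assoc, add_sum_erase C l hz]
  rfl

theorem hasDerivAt_abelPoly (C : Finset ι) (y : ℝ) :
    HasDerivAt (fun y => abelPoly l y C) (∑ z ∈ C, abelPoly l (y + l z) (C.erase z)) y := by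
  rcases C.eq_empty_or_nonempty with rfl | hC
  · simpa [abelPoly] using hasDerivAt_const y (1 : ℝ)
  obtain ⟨k, hk⟩ : ∃ k, #C = k + 1 := Nat.exists_eq_add_one.2 hC.card_pos
  set s := ∑ i ∈ C, l i
  have hfun : (fun y => abelPoly l y C) = fun y => y * (y + s) ^ k := funext fun y => by
    rw [abelPoly, if_neg hC.ne_empty, hk, Nat.add_sub_cancel]
  have hd : HasDerivAt (fun y => y * (y + s) ^ k)
      ((y + s) ^ k + y * (k * (y + s) ^ (k - 1))) y := by
    simpa using (hasDerivAt_id' y).fun_mul (((hasDerivAt_id' y).add_const s).fun_pow k)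
  rw [hfun]
  convert hd using 1
  rcases k with _ | k
  · obtain ⟨z, rfl⟩ := card_eq_one.1 hk
    simp [abelPoly]
  · rw [sum_congr rfl fun z hz => abelPoly_erase l hz (by omega) y, ← sum_mul, sum_add_distrib,
      sum_const, hk, nsmul_eq_mul]
    simp only [Nat.add_sub_cancel]
    push_cast
    ring

theorem sum_powerset_pow_mul_abelPoly (x : ℝ) (T : Finset ι) (y : ℝ) :
    ∑ A ∈ T.powerset, (x + ∑ i ∈ A, l i) ^ #A * abelPoly l y (T \ A) =
      (x + y + ∑ i ∈ T, l i) ^ #T := by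
  induction T using Finset.strongInduction generalizing y with
  | H T ih =>
  set F : ℝ → ℝ := fun y =>
    ∑ A ∈ T.powerset, (x + ∑ i ∈ A, l i) ^ #A * abelPoly l y (T \ A)
  set G : ℝ → ℝ := fun y => (x + y + ∑ i ∈ T, l i) ^ #T
  have hF : ∀ y, HasDerivAt F (#T * (x + y + ∑ i ∈ T, l i) ^ (#T - 1)) y := by
    intro y
    refine (HasDerivAt.fun_sum fun A _ =>
      (hasDerivAt_abelPoly l (T \ A) y).const_mul ((x + ∑ i ∈ A, l i) ^ #A)).congr_deriv ?_
    simp_rw [mul_sum, ← erase_sdiff_comm]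
    rw [sum_comm' (t' := T) (s' := fun z => (T.erase z).powerset) fun A z => by
      simp only [mem_powerset, mem_sdiff, subset_erase]
      tauto]
    have hbase : ∀ z ∈ T, x + (y + l z) + ∑ i ∈ T.erase z, l i = x + y + ∑ i ∈ T, l i :=
      fun z hz => by rw [← add_sum_erase T l hz]; ring
    rw [sum_congr rfl fun z hz => by
      rw [ih _ (erase_ssubset hz), hbase z hz, card_erase_of_mem hz], sum_const, nsmul_eq_mul]
  have hG : ∀ y, HasDerivAt G (#T * (x + y + ∑ i ∈ T, l i) ^ (#T - 1)) y := fun y => by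
    simpa using ((hasDerivAt_id' y).const_add x |>.add_const (∑ i ∈ T, l i)).fun_pow #T
  have h0 : F 0 = G 0 := by
    refine (sum_eq_single_of_mem T (mem_powerset_self T) fun A hA hAT => ?_).trans ?_
    · have hne : T \ A ≠ ∅ :=
        (sdiff_nonempty.2 fun hTA => hAT ((mem_powerset.1 hA).antisymm hTA)).ne_empty
      simp [abelPoly, hne]
    · simp [abelPoly, G]
  have hconst := is_const_of_deriv_eq_zero (f := F - G)
    (fun t => ((hF t).sub (hG t)).differentiableAt)
    (fun t => by rw [((hF t).sub (hG t)).deriv, sub_self]) y 0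
  simpa only [Pi.sub_apply, h0, sub_self, sub_eq_zero] using hconst

theorem sum_partitionsOf_pow_card_mul_prod (y : ℝ) (S : Finset ι) :
    ∑ P ∈ partitionsOf S, y ^ #P * ∏ B ∈ P, (∑ i ∈ B, l i) ^ (#B - 1) = abelPoly l y S := by
  induction S using Finset.strongInduction with
  | H S ih =>
  rcases S.eq_empty_or_nonempty with rfl | ⟨x, hx⟩
  · simp [partitionsOf_empty, abelPoly]
  have hblock : ∀ A ∈ (S.erase x).powerset,
      ∑ Q ∈ partitionsOf (S.erase x \ A), y ^ #(insert (insert x A) Q) *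
          ∏ B ∈ insert (insert x A) Q, (∑ i ∈ B, l i) ^ (#B - 1) =
        y * ((l x + ∑ i ∈ A, l i) ^ #A * abelPoly l y (S.erase x \ A)) := by
    intro A hA
    have hxA : x ∉ A := fun hxA => notMem_erase x S (mem_powerset.1 hA hxA)
    rw [← ih _ (sdiff_subset.trans_ssubset (erase_ssubset hx)), mul_sum, mul_sum]
    refine sum_congr rfl fun Q hQ => ?_
    have hxQ : insert x A ∉ Q := fun h =>
      notMem_erase x S (mem_sdiff.1 ((mem_partitionsOf.1 hQ).subset h (mem_insert_self x A))).1
    rw [card_insert_of_notMem hxQ, prod_insert hxQ, card_insert_of_notMem hxA, sum_insert hxA,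
      Nat.add_sub_cancel]
    ring
  rw [sum_partitionsOf_eq_sum_powerset hx, sum_congr rfl hblock, ← mul_sum,
    sum_powerset_pow_mul_abelPoly, abelPoly, if_neg (ne_empty_of_mem hx), card_erase_of_mem hx,
    add_comm (l x) y, add_assoc, add_sum_erase S l hx]

open Polynomial in
theorem sum_partitionsOf_card_eq_choose_mul_pow {S : Finset ι} (hS : S.Nonempty) {σ : ℕ}
    (hσ : σ ≠ 0) :
    ∑ P ∈ partitionsOf S with #P = σ, ∏ B ∈ P, (∑ i ∈ B, l i) ^ (#B - 1) =
      (#S - 1).choose (σ - 1) * (∑ i ∈ S, l i) ^ (#S - σ) := by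
  have hpoly : ∑ P ∈ partitionsOf S, monomial #P (∏ B ∈ P, (∑ i ∈ B, l i) ^ (#B - 1)) =
      X * (X + C (∑ i ∈ S, l i)) ^ (#S - 1) := by
    refine Polynomial.funext fun y => ?_
    have := sum_partitionsOf_pow_card_mul_prod l y S
    rw [abelPoly, if_neg hS.ne_empty] at this
    simp [eval_finsetSum, ← this, mul_comm]
  obtain ⟨k, rfl⟩ := Nat.exists_eq_add_one.2 (Nat.pos_of_ne_zero hσ)
  have hcoeff := congrArg (coeff · (k + 1)) hpoly
  simp only [finsetSum_coeff, coeff_monomial, coeff_X_mul, coeff_X_add_C_pow] at hcoeff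
  rw [sum_filter, hcoeff, Nat.add_sub_cancel, Nat.sub_sub, add_comm 1 k, mul_comm]

end

theorem setPartitions_eq_filter (m : ℕ) (S : Finset (Fin m)) (σ : ℕ) :
    setPartitions m S σ = {P ∈ partitionsOf S | #P = σ} := by
  ext P
  simp only [setPartitions, mem_filter, mem_univ, true_and, mem_partitionsOf, IsSetPartition]
  tauto

theorem stmt_4_general (m σ : ℕ) (hm : 2 ≤ m) (hσ2 : 2 ≤ σ)
    (l : Fin m → ℝ) :
    ∑ P ∈ setPartitions m Finset.univ σ,
        ∏ B ∈ P, (∑ i ∈ B, l i) ^ (B.card - 1)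
      = ((m - 1).choose (σ - 1) : ℝ) * (∑ i, l i) ^ (m - σ) := by
  have huniv : (univ : Finset (Fin m)).Nonempty := univ_nonempty_iff.2 ⟨⟨0, by omega⟩⟩
  rw [setPartitions_eq_filter, sum_partitionsOf_card_eq_choose_mul_pow l huniv (by omega),
    card_univ, Fintype.card_fin]

theorem stmt_4 (m σ : ℕ) (hm : 2 ≤ m) (hσ2 : 2 ≤ σ) (hσm : σ ≤ m)
    (l : Fin m → ℝ) (hl : ∀ i, 0 < l i) :
    ∑ P ∈ setPartitions m Finset.univ σ,
        ∏ B ∈ P, (∑ i ∈ B, l i) ^ (B.card - 1)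
      = ((m - 1).choose (σ - 1) : ℝ) * (∑ i, l i) ^ (m - σ) :=
  stmt_4_general m σ hm hσ2 l
end

section
/- For every integer n ≥ 0 and positive integer l, the identity N_n^{(1)}(l) = ∑ over nonnegative integers n_1,…,n_l with n_1+⋯+n_l = n of (n! / (n_1! ⋯ n_l!)) ∏_{i=1}^{l} (n_i + 1)^{n_i − 1} holds, where N_n^{(1)}(l) = l (l+n)^{n−1}. -/
/-!
Put `A_n(x) = x (x + n)^(n-1)`, so that `(m + 1)^(m-1) = A_m(1)` and the left side is `A_n(l)`.
Splitting off the first part of a composition, induction on `l` reduces the theorem to Abel's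
convolution `∑ₖ C(n,k) A_k(x) A_{n-k}(y) = A_n(x + y)`. Since
`A_{n-k}(y) = (z - k)^(n-k) - (n - k) (z - k)^(n-k-1)` with `z = y + n`, the convolution follows
from Abel's identity `∑ₖ C(n,k) A_k(x) (z - k)^(n-k) = (x + z)^n`. That identity is proved by
induction on `n`: differentiating in `z` turns the degree `n` case into `n` times the degree `n - 1`
case, and at `z = -x` the left side is `x` times an `n`-th finite difference of a polynomial of
degree `n - 1`, hence vanishes.
-/

open Finset

lemma sum_range_neg_one_pow_mul_choose_mul_add_pow {R : Type*} [CommRing R] (x : R) {d n : ℕ}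
    (h : d < n) : ∑ k ∈ range (n + 1), (-1) ^ (n - k) * n.choose k * (x + k) ^ d = 0 := by
  have := fwdDiff_iter_eq_sum_shift (h := 1) (fun r : R => r ^ d) n x
  rw [fwdDiff_iter_pow_eq_zero_of_lt h] at this
  simpa [zsmul_eq_mul] using this.symm

lemma Finset.Nat.sum_antidiagonalTuple_succ {M : Type*} [AddCommMonoid M] (k n : ℕ)
    (f : (Fin (k + 1) → ℕ) → M) :
    ∑ c ∈ antidiagonalTuple (k + 1) n, f c =
      ∑ p ∈ antidiagonal n, ∑ c ∈ antidiagonalTuple k p.2, f (Fin.cons p.1 c) := by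
  change (Multiset.map f (Multiset.ofList (List.Nat.antidiagonalTuple (k + 1) n))).sum =
    (Multiset.map _ (Multiset.ofList (List.Nat.antidiagonal n))).sum
  simp only [List.Nat.antidiagonalTuple, List.flatMap, Multiset.map_coe, List.map_flatten,
    List.map_map, Multiset.sum_coe, List.sum_flatten]
  congr 2
  funext p
  change _ = (Multiset.map _ (Multiset.ofList (List.Nat.antidiagonalTuple k p.2))).sum
  simp only [Function.comp_def, Multiset.map_coe, Multiset.sum_coe, List.map_map]

def abelSum (a : ℕ → ℝ) (n : ℕ) (z : ℝ) : ℝ :=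
  ∑ k ∈ range (n + 1), n.choose k * a k * (z - k) ^ (n - k)

lemma sum_choose_mul_sub_mul_pow (a : ℕ → ℝ) (n : ℕ) (z : ℝ) :
    ∑ k ∈ range (n + 1), n.choose k * a k * ((n - k : ℕ) * (z - k) ^ (n - k - 1)) =
      n * abelSum a (n - 1) z := by
  cases n with
  | zero => simp
  | succ m =>
    rw [sum_range_succ, Nat.sub_self, Nat.cast_zero, zero_mul, mul_zero, add_zero, abelSum,
      Nat.add_sub_cancel, mul_sum]
    refine sum_congr rfl fun k hk => ?_
    have hchoose : ((m + 1).choose k * (m + 1 - k : ℕ) : ℝ) = (m + 1 : ℕ) * m.choose k := by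
      rw [mul_comm ((m + 1 : ℕ) : ℝ)]
      exact_mod_cast (Nat.choose_mul_succ_eq m k).symm
    rw [show m + 1 - k - 1 = m - k by omega]
    linear_combination a k * (z - k) ^ (m - k) * hchoose

lemma hasDerivAt_abelSum (a : ℕ → ℝ) (n : ℕ) (z : ℝ) :
    HasDerivAt (abelSum a n) (n * abelSum a (n - 1) z) z := by
  rw [← sum_choose_mul_sub_mul_pow]
  refine HasDerivAt.fun_sum fun k _ => ?_
  simpa using (((hasDerivAt_id z).sub_const (k : ℝ)).pow (n - k)).const_mul (n.choose k * a k)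

/-- At `n = 0` the integer exponent gives `x * x⁻¹`, which is `1` only when `x ≠ 0`. -/
noncomputable def abelTerm (x : ℝ) (n : ℕ) : ℝ := x * (x + n) ^ ((n : ℤ) - 1)

section abelTerm

variable {x : ℝ}

lemma abelTerm_zero (hx : x ≠ 0) : abelTerm x 0 = 1 := by
  simp [abelTerm, hx]

lemma abelTerm_succ (x : ℝ) (n : ℕ) : abelTerm x (n + 1) = x * (x + (n + 1 : ℕ)) ^ n := by
  simp [abelTerm]

lemma abelTerm_eq_sub (hx : x ≠ 0) (n : ℕ) :
    abelTerm x n = (x + n) ^ n - n * (x + n) ^ (n - 1) := by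
  cases n with
  | zero => simp [abelTerm_zero hx]
  | succ m => rw [abelTerm_succ, pow_succ, Nat.add_sub_cancel]; ring

lemma abelTerm_mul_neg_pow (hx : x ≠ 0) {k n : ℕ} (hkn : k ≤ n) (hn : 0 < n) :
    abelTerm x k * (-(x + k)) ^ (n - k) = (-1) ^ (n - k) * (x * (x + k) ^ (n - 1)) := by
  rw [neg_pow]
  cases k with
  | zero =>
    rw [abelTerm_zero hx, Nat.cast_zero, add_zero, Nat.sub_zero, ← mul_pow_sub_one hn.ne' x]
    ring
  | succ j =>
    rw [abelTerm_succ, show n - 1 = j + (n - (j + 1)) by omega, pow_add]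
    ring

lemma abelSum_abelTerm_neg (hx : x ≠ 0) {n : ℕ} (hn : 0 < n) :
    abelSum (abelTerm x) n (-x) = 0 := by
  calc abelSum (abelTerm x) n (-x)
      = x * ∑ k ∈ range (n + 1), (-1) ^ (n - k) * n.choose k * (x + k) ^ (n - 1) := by
        rw [abelSum, mul_sum]
        refine sum_congr rfl fun k hk => ?_
        rw [show -x - k = -(x + k) by ring, mul_assoc,
          abelTerm_mul_neg_pow hx (Nat.lt_succ_iff.mp (mem_range.mp hk)) hn]
        ring
    _ = 0 := by
        rw [sum_range_neg_one_pow_mul_choose_mul_add_pow x (Nat.sub_lt hn one_pos), mul_zero]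

theorem abelSum_abelTerm (hx : x ≠ 0) (n : ℕ) (z : ℝ) :
    abelSum (abelTerm x) n z = (x + z) ^ n := by
  induction n generalizing z with
  | zero => simp [abelSum, abelTerm_zero hx]
  | succ m ih =>
    have hderiv : ∀ y, HasDerivAt
        (fun y => abelSum (abelTerm x) (m + 1) y - (x + y) ^ (m + 1)) 0 y := by
      intro y
      simpa [ih] using (hasDerivAt_abelSum (abelTerm x) (m + 1) y).fun_sub
        (((hasDerivAt_id' y).const_add x).fun_pow (m + 1))
    have hconst := is_const_of_deriv_eq_zero (fun y => (hderiv y).differentiableAt)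
      (fun y => (hderiv y).deriv) z (-x)
    rw [abelSum_abelTerm_neg hx m.succ_pos, add_neg_cancel, zero_pow m.succ_ne_zero,
      sub_zero] at hconst
    exact sub_eq_zero.mp hconst

theorem sum_choose_mul_abelTerm_mul_abelTerm {y : ℝ} (hx : x ≠ 0) (hy : y ≠ 0)
    (hxy : x + y ≠ 0) (n : ℕ) :
    ∑ k ∈ range (n + 1), n.choose k * abelTerm x k * abelTerm y (n - k) =
      abelTerm (x + y) n := by
  have hsplit : ∀ k ∈ range (n + 1), n.choose k * abelTerm x k * abelTerm y (n - k) =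
      n.choose k * abelTerm x k * (y + n - k) ^ (n - k) -
        n.choose k * abelTerm x k * ((n - k : ℕ) * (y + n - k) ^ (n - k - 1)) := by
    intro k hk
    rw [abelTerm_eq_sub hy, Nat.cast_sub (Nat.lt_succ_iff.mp (mem_range.mp hk))]
    ring
  calc ∑ k ∈ range (n + 1), n.choose k * abelTerm x k * abelTerm y (n - k)
      = abelSum (abelTerm x) n (y + n) - n * abelSum (abelTerm x) (n - 1) (y + n) := by
        rw [sum_congr rfl hsplit, sum_sub_distrib, sum_choose_mul_sub_mul_pow]
        rfl
    _ = abelTerm (x + y) n := by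
        rw [abelSum_abelTerm hx, abelSum_abelTerm hx, abelTerm_eq_sub hxy, add_assoc]

end abelTerm

open Nat in
/-- `n!` times the coefficient of `X^n` in `(∑ₘ f m X^m / m!)^l`. -/
noncomputable def multinomialSum (f : ℕ → ℝ) (l n : ℕ) : ℝ :=
  ∑ c ∈ Finset.Nat.antidiagonalTuple l n, ((n ! : ℝ) / ∏ i, ((c i)! : ℝ)) * ∏ i, f (c i)

lemma multinomialSum_one (f : ℕ → ℝ) (n : ℕ) : multinomialSum f 1 n = f n := by
  simp [multinomialSum, Finset.Nat.antidiagonalTuple_one, Nat.factorial_ne_zero]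

lemma multinomialSum_succ (f : ℕ → ℝ) (l n : ℕ) :
    multinomialSum f (l + 1) n =
      ∑ k ∈ range (n + 1), n.choose k * f k * multinomialSum f l (n - k) := by
  rw [multinomialSum, Finset.Nat.sum_antidiagonalTuple_succ,
    Finset.Nat.sum_antidiagonal_eq_sum_range_succ_mk]
  refine sum_congr rfl fun k hk => ?_
  rw [multinomialSum, mul_sum]
  refine sum_congr rfl fun c _ => ?_
  simp only [Fin.prod_univ_succ, Fin.cons_zero, Fin.cons_succ]
  rw [← Nat.choose_mul_factorial_mul_factorial (Nat.lt_succ_iff.mp (mem_range.mp hk))]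
  push_cast
  field_simp

lemma multinomialSum_abelTerm_one {l : ℕ} (hl : 0 < l) (n : ℕ) :
    multinomialSum (abelTerm 1) l n = abelTerm l n := by
  induction l, hl using Nat.le_induction generalizing n with
  | base => rw [multinomialSum_one, Nat.cast_one]
  | succ l hl ih =>
    simp_rw [multinomialSum_succ, ih, Nat.cast_succ, add_comm (l : ℝ)]
    exact sum_choose_mul_abelTerm_mul_abelTerm one_ne_zero (by positivity) (by positivity) n

theorem stmt_6 (n l : ℕ) (hl : 0 < l) :
    (l : ℝ) * ((l : ℝ) + n) ^ ((n : ℤ) - 1)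
      = ∑ c ∈ Finset.Nat.antidiagonalTuple l n,
          ((n.factorial : ℝ) / ∏ i, ((c i).factorial : ℝ)) *
            ∏ i, ((c i : ℝ) + 1) ^ ((c i : ℤ) - 1) := by
  have hterm : ∀ m : ℕ, ((m : ℝ) + 1) ^ ((m : ℤ) - 1) = abelTerm 1 m := fun m => by
    rw [abelTerm, one_mul, add_comm]
  simp_rw [hterm]
  exact (multinomialSum_abelTerm_one hl n).symm
end

section
/- Let ν̄(x) = 1/(1 + |x|^α) for x ∈ ℝ^d with α > d. Then for all p ≥ 2 and x_1,…,x_p ∈ ℝ^d: ∫_{ℝ^d} ∏_{r=1}^p ν̄(x_r − y) dy ≤ 2^{α(p−1)} ν̄_1 ∑_{r=1}^p ∏_{k≠r} ν̄(x_k − x_r), where ν̄_1 = ∫_{ℝ^d} ν̄(x) dx < ∞. -/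
/-!
Write `ν̄ = polyKernel α`. Fix `y` and let `x r₀` be the point closest to `y`. For every `k` the triangle inequality gives
`‖x k - x r₀‖ ≤ 2 ‖x k - y‖`, so `ν̄(x k - y) ≤ 2 ^ α ν̄(x k - x r₀)`. Hence the integrand is bounded
pointwise by `2 ^ (α (p - 1))` times the sum over `r` of `ν̄(x r - y) ∏_{k ≠ r} ν̄(x k - x r)`, and
integrating each summand in `y` produces `ν̄₁` by translation invariance. The kernel is integrable
because it is comparable to `(1 + ‖y‖) ^ (-α)`.
-/

open MeasureTheory Module Finset

lemma Real.add_rpow_le_two_rpow_mul_rpow_add_rpow {a b p : ℝ} (ha : 0 ≤ a) (hb : 0 ≤ b)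
    (hp : 0 ≤ p) : (a + b) ^ p ≤ 2 ^ p * (a ^ p + b ^ p) := calc
  (a + b) ^ p ≤ (2 * max a b) ^ p := by
    gcongr
    linarith [le_max_left a b, le_max_right a b]
  _ = 2 ^ p * max a b ^ p := Real.mul_rpow zero_le_two (le_max_of_le_left ha)
  _ ≤ 2 ^ p * (a ^ p + b ^ p) := by
    gcongr
    rcases le_total a b with hab | hab
    · simpa [max_eq_right hab] using Real.rpow_nonneg ha p
    · simpa [max_eq_left hab] using Real.rpow_nonneg hb p

variable {E : Type*} [NormedAddCommGroup E]

noncomputable def polyKernel (α : ℝ) (z : E) : ℝ := (1 + ‖z‖ ^ α)⁻¹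

lemma polyKernel_nonneg (α : ℝ) (z : E) : 0 ≤ polyKernel α z := by
  unfold polyKernel
  positivity

lemma polyKernel_sub_comm (α : ℝ) (x y : E) : polyKernel α (x - y) = polyKernel α (y - x) := by
  rw [polyKernel, polyKernel, norm_sub_rev]

lemma polyKernel_le_two_rpow_mul {α : ℝ} (hα : 0 ≤ α) {z w : E} (h : ‖w‖ ≤ 2 * ‖z‖) :
    polyKernel α z ≤ 2 ^ α * polyKernel α w := by
  have key : 1 + ‖w‖ ^ α ≤ 2 ^ α * (1 + ‖z‖ ^ α) := calc
    1 + ‖w‖ ^ α ≤ 2 ^ α + (2 * ‖z‖) ^ α := by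
      gcongr
      exact Real.one_le_rpow one_le_two hα
    _ = 2 ^ α * (1 + ‖z‖ ^ α) := by rw [Real.mul_rpow zero_le_two (norm_nonneg z)]; ring
  unfold polyKernel
  rw [← div_eq_mul_inv, le_div_iff₀ (by positivity), ← div_eq_inv_mul,
    div_le_iff₀ (by positivity)]
  linarith

lemma integrable_polyKernel [NormedSpace ℝ E] [FiniteDimensional ℝ E] [MeasurableSpace E]
    [BorelSpace E] (μ : Measure E) [μ.IsAddHaarMeasure] {α : ℝ} (hα : (finrank ℝ E : ℝ) < α) :
    Integrable (polyKernel α) μ := by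
  have hα₀ : 0 ≤ α := (Nat.cast_nonneg _).trans hα.le
  refine ((integrable_one_add_norm hα).const_mul (2 ^ α)).mono'
    (by unfold polyKernel; fun_prop) (ae_of_all _ fun z => ?_)
  have hcomp : (1 + ‖z‖) ^ α ≤ 2 ^ α * (1 + ‖z‖ ^ α) := by
    simpa using Real.add_rpow_le_two_rpow_mul_rpow_add_rpow zero_le_one (norm_nonneg z) hα₀
  rw [Real.norm_of_nonneg (polyKernel_nonneg α z), polyKernel,
    Real.rpow_neg (by positivity), ← div_eq_mul_inv, le_div_iff₀ (by positivity),
    ← div_eq_inv_mul, div_le_iff₀ (by positivity)]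
  linarith

variable {ι : Type*} [Fintype ι] [DecidableEq ι] [Nonempty ι]

lemma prod_polyKernel_le {α : ℝ} (hα : 0 ≤ α) (x : ι → E) (y : E) :
    ∏ r, polyKernel α (x r - y) ≤ (2 ^ α) ^ (Fintype.card ι - 1) *
      ∑ r, polyKernel α (x r - y) * ∏ k ∈ univ.erase r, polyKernel α (x k - x r) := by
  obtain ⟨r₀, -, hmin⟩ := exists_min_image univ (fun r => ‖x r - y‖) univ_nonempty
  have hfar (k : ι) : polyKernel α (x k - y) ≤ 2 ^ α * polyKernel α (x k - x r₀) := by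
    refine polyKernel_le_two_rpow_mul hα ?_
    calc ‖x k - x r₀‖
        ≤ ‖x k - y‖ + ‖x r₀ - y‖ := by
          simpa only [dist_eq_norm] using dist_triangle_right (x k) (x r₀) y
      _ ≤ 2 * ‖x k - y‖ := by linarith [hmin k (mem_univ k)]
  calc ∏ r, polyKernel α (x r - y)
      = polyKernel α (x r₀ - y) * ∏ k ∈ univ.erase r₀, polyKernel α (x k - y) :=
        (mul_prod_erase _ _ (mem_univ r₀)).symm
    _ ≤ polyKernel α (x r₀ - y) * ∏ k ∈ univ.erase r₀, (2 ^ α * polyKernel α (x k - x r₀)) :=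
        mul_le_mul_of_nonneg_left
          (prod_le_prod (fun k _ => polyKernel_nonneg _ _) fun k _ => hfar k)
          (polyKernel_nonneg _ _)
    _ = (2 ^ α) ^ (Fintype.card ι - 1) *
          (polyKernel α (x r₀ - y) * ∏ k ∈ univ.erase r₀, polyKernel α (x k - x r₀)) := by
        rw [prod_mul_distrib, prod_const, card_erase_of_mem (mem_univ r₀), card_univ]
        ring
    _ ≤ _ := by
        gcongr
        exact single_le_sum (f := fun r => polyKernel α (x r - y) *
            ∏ k ∈ univ.erase r, polyKernel α (x k - x r))
          (fun r _ => mul_nonneg (polyKernel_nonneg _ _)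
            (prod_nonneg fun k _ => polyKernel_nonneg _ _)) (mem_univ r₀)

lemma integral_prod_polyKernel_le [MeasurableSpace E] [MeasurableAdd E] {μ : Measure E}
    [μ.IsAddRightInvariant] {α : ℝ} (hα : 0 ≤ α) (hK : Integrable (polyKernel α) μ)
    (x : ι → E) :
    ∫ y, ∏ r, polyKernel α (x r - y) ∂μ ≤ (2 ^ α) ^ (Fintype.card ι - 1) *
      (∫ y, polyKernel α y ∂μ) * ∑ r, ∏ k ∈ univ.erase r, polyKernel α (x k - x r) := by
  have htrans (r : ι) : Integrable (fun y => polyKernel α (x r - y)) μ := by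
    simpa only [polyKernel_sub_comm α (x r)] using hK.comp_sub_right (x r)
  have hint (r : ι) : ∫ y, polyKernel α (x r - y) ∂μ = ∫ y, polyKernel α y ∂μ := by
    simpa only [polyKernel_sub_comm α (x r)] using integral_sub_right_eq_self (polyKernel α) (x r)
  have hsum := integrable_finsetSum univ fun r _ =>
    (htrans r).mul_const (∏ k ∈ univ.erase r, polyKernel α (x k - x r))
  calc ∫ y, ∏ r, polyKernel α (x r - y) ∂μ
      ≤ ∫ y, (2 ^ α) ^ (Fintype.card ι - 1) *
          ∑ r, polyKernel α (x r - y) * ∏ k ∈ univ.erase r, polyKernel α (x k - x r) ∂μ :=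
        integral_mono_of_nonneg
          (ae_of_all _ fun y => prod_nonneg fun r _ => polyKernel_nonneg _ _)
          (hsum.const_mul _) (ae_of_all _ (prod_polyKernel_le hα x))
    _ = _ := by
        rw [integral_const_mul, integral_finsetSum _ fun r _ => (htrans r).mul_const _]
        simp only [integral_mul_const, hint, ← mul_sum]
        ring

theorem stmt_7 (d : ℕ) (α : ℝ) (hα : (d : ℝ) < α) (p : ℕ) (hp : 2 ≤ p)
    (x : Fin p → EuclideanSpace ℝ (Fin d)) :
    ∫ y : EuclideanSpace ℝ (Fin d), ∏ r : Fin p, (1 + ‖x r - y‖ ^ α)⁻¹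
      ≤ (2 : ℝ) ^ (α * ((p : ℝ) - 1)) *
          (∫ y : EuclideanSpace ℝ (Fin d), (1 + ‖y‖ ^ α)⁻¹) *
          ∑ r : Fin p, ∏ k ∈ Finset.univ.erase r, (1 + ‖x k - x r‖ ^ α)⁻¹ := by
  have : Nonempty (Fin p) := ⟨⟨0, by omega⟩⟩
  have hα₀ : 0 ≤ α := d.cast_nonneg.trans hα.le
  have hK : Integrable (polyKernel α) (volume : Measure (EuclideanSpace ℝ (Fin d))) :=
    integrable_polyKernel _ (by rwa [finrank_euclideanSpace_fin])
  have hexp : (2 : ℝ) ^ (α * ((p : ℝ) - 1)) = (2 ^ α) ^ (p - 1) := by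
    rw [← Nat.cast_pred (by omega), Real.rpow_mul_natCast zero_le_two]
  rw [hexp]
  simpa only [Fintype.card_fin, polyKernel] using integral_prod_polyKernel_le hα₀ hK x
end

section
/- For 0 ≤ x < 1 and nonnegative integers u, v: ∑_{r=v}^{∞} r^u x^{r−v} ≤ ∑_{k=0}^{u} k! (v+k)^u / (1−x)^{k+1}. -/
/-!
Expand `(v + j) ^ u` in the binomial basis `j.choose k`: for `u ≤ j` each of the `u` factors
`v + j` is at most `(v + u) * (j - i)`, so `(v + j) ^ u ≤ u! (v + u) ^ u * j.choose u`, and for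
`j < u` the single term `k = j` already suffices. Against `x ^ j` the basis sums to
`∑ j, j.choose k * x ^ j = x ^ k / (1 - x) ^ (k + 1) ≤ 1 / (1 - x) ^ (k + 1)`.
-/

open Finset

theorem Nat.add_pow_le_add_pow_mul_descFactorial {u j : ℕ} (v : ℕ) (h : u ≤ j) :
    (v + j) ^ u ≤ (v + u) ^ u * j.descFactorial u := by
  have factor_le : ∀ i ∈ range u, v + j ≤ (v + u) * (j - i) := by
    intro i hi
    have hiu := mem_range.mp hi
    obtain ⟨d, rfl⟩ : ∃ d, j = i + d + 1 := ⟨j - i - 1, by omega⟩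
    rw [show i + d + 1 - i = d + 1 by omega]
    nlinarith
  calc (v + j) ^ u = ∏ _i ∈ range u, (v + j) := by rw [prod_const, card_range]
    _ ≤ ∏ i ∈ range u, (v + u) * (j - i) := prod_le_prod' factor_le
    _ = (v + u) ^ u * j.descFactorial u := by
      rw [prod_mul_distrib, prod_const, card_range, Nat.descFactorial_eq_prod_range]

theorem Nat.add_pow_le_sum_factorial_mul_choose (u v j : ℕ) :
    (v + j) ^ u ≤ ∑ k ∈ range (u + 1), k.factorial * (v + k) ^ u * j.choose k := by
  refine le_trans ?_ (single_le_sum (fun k _ => Nat.zero_le _)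
    (mem_range.mpr (Nat.lt_succ_of_le (min_le_right j u))))
  rcases le_total j u with hju | huj
  · rw [min_eq_left hju, Nat.choose_self, mul_one]
    exact Nat.le_mul_of_pos_left _ j.factorial_pos
  · rw [min_eq_right huj, mul_right_comm, mul_comm, ← Nat.descFactorial_eq_factorial_mul_choose]
    exact add_pow_le_add_pow_mul_descFactorial v huj

theorem hasSum_choose_mul_pow_of_norm_lt_one {𝕜 : Type*} [NormedDivisionRing 𝕜]
    (k : ℕ) {r : 𝕜} (hr : ‖r‖ < 1) :
    HasSum (fun n ↦ (n.choose k : 𝕜) * r ^ n) (r ^ k / (1 - r) ^ (k + 1)) := by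
  have shifted : HasSum (fun n ↦ ((n + k).choose k : 𝕜) * r ^ (n + k))
      (r ^ k / (1 - r) ^ (k + 1)) := by
    have summand_eq : (fun n ↦ ((n + k).choose k : 𝕜) * r ^ (n + k))
        = fun n ↦ r ^ k * (((n + k).choose k : 𝕜) * r ^ n) := funext fun n ↦ by
      rw [← mul_assoc, ← Nat.cast_comm, mul_assoc, ← pow_add, add_comm k]
    rw [summand_eq, ← mul_one_div]
    exact (hasSum_choose_mul_geometric_of_norm_lt_one k hr).mul_left (r ^ k)
  have initial_zero : ∑ i ∈ range k, (i.choose k : 𝕜) * r ^ i = 0 :=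
    sum_eq_zero fun i hi ↦ by
      rw [Nat.choose_eq_zero_of_lt (mem_range.mp hi), Nat.cast_zero, zero_mul]
  rw [← hasSum_nat_add_iff' k, initial_zero, sub_zero]
  exact shifted

theorem stmt_9 (x : ℝ) (hx0 : 0 ≤ x) (hx1 : x < 1) (u v : ℕ) :
    ∑' j : ℕ, ((v : ℝ) + j) ^ u * x ^ j
      ≤ ∑ k ∈ Finset.range (u + 1),
          (k.factorial : ℝ) * ((v : ℝ) + k) ^ u / (1 - x) ^ (k + 1) := by
  set c : ℕ → ℝ := fun k ↦ k.factorial * ((v : ℝ) + k) ^ u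
  have hx : ‖x‖ < 1 := by rwa [Real.norm_of_nonneg hx0]
  have majorant : HasSum (fun j : ℕ ↦ ∑ k ∈ range (u + 1), c k * ((j.choose k : ℝ) * x ^ j))
      (∑ k ∈ range (u + 1), c k * (x ^ k / (1 - x) ^ (k + 1))) :=
    hasSum_sum fun k _ ↦ (hasSum_choose_mul_pow_of_norm_lt_one k hx).mul_left (c k)
  have term_le (j : ℕ) :
      ((v : ℝ) + j) ^ u * x ^ j ≤ ∑ k ∈ range (u + 1), c k * ((j.choose k : ℝ) * x ^ j) := by
    calc ((v : ℝ) + j) ^ u * x ^ j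
        ≤ (∑ k ∈ range (u + 1), c k * j.choose k) * x ^ j := by
          gcongr
          simp only [c]
          exact_mod_cast Nat.add_pow_le_sum_factorial_mul_choose u v j
      _ = _ := by simp only [sum_mul, mul_assoc]
  calc ∑' j : ℕ, ((v : ℝ) + j) ^ u * x ^ j
      ≤ ∑ k ∈ range (u + 1), c k * (x ^ k / (1 - x) ^ (k + 1)) :=
        Real.tsum_le_of_sum_le (fun j ↦ by positivity) fun s ↦ (sum_le_sum fun j _ ↦ term_le j).trans
          (sum_le_hasSum s (fun j _ ↦ by positivity) majorant)
    _ ≤ ∑ k ∈ range (u + 1), c k / (1 - x) ^ (k + 1) := by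
      gcongr with k
      rw [← mul_div_assoc]
      gcongr
      exact mul_le_of_le_one_right (by positivity) (pow_le_one₀ hx0 hx1.le)
end

section
/- Let 0 < q := h ν_1 e < 1, where h, ν_1 > 0. Then for every positive integer l, ∑_{n=0}^{∞} (h ν_1)^n N_n^{(1)}(l) / n! ≤ (1 − h ν_1 e)^{−l}, where N_n^{(1)}(l) = l (l+n)^{n−1}. -/
open Finset in
lemma asc_prod (l m : ℕ) : (l+1).ascFactorial m = ∏ j ∈ Finset.range m, (l+1+j) := by
  induction m with
  | zero => simp
  | succ m ih => rw [Nat.ascFactorial_succ, prod_range_succ, ih, mul_comm]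

open Finset in
lemma key_nat (l m : ℕ) : (l+m+1)^m * m.factorial ≤ (l+1).ascFactorial m * (m+1)^m := by
  rw [asc_prod, ← Finset.prod_range_add_one_eq_factorial,
    show (l+m+1)^m = ∏ _j ∈ Finset.range m, (l+m+1) by simp,
    show (m+1)^m = ∏ _j ∈ Finset.range m, (m+1) by simp,
    ← Finset.prod_mul_distrib, ← Finset.prod_mul_distrib]
  apply Finset.prod_le_prod'
  intro j hj
  have hjm : j + 1 ≤ m := Finset.mem_range.mp hj
  nlinarith [Nat.mul_le_mul_left l hjm]

lemma pow_div_fact_le_exp (n : ℕ) : (n:ℝ) ^ n / n.factorial ≤ Real.exp 1 ^ n := by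
  have h1 : (n:ℝ) ^ n / n.factorial ≤ Real.exp n := by
    refine le_trans ?_ (Real.sum_le_exp_of_nonneg (Nat.cast_nonneg n) (n+1))
    refine Finset.single_le_sum (f := fun i => (n:ℝ)^i / i.factorial) ?_
      (Finset.self_mem_range_succ n)
    intro i _
    positivity
  calc (n:ℝ) ^ n / n.factorial ≤ Real.exp n := h1
    _ = Real.exp 1 ^ n := by rw [← Real.exp_nat_mul, mul_one]

lemma key_real (l m : ℕ) : (l:ℝ) * ((l:ℝ) + (m+1:ℕ)) ^ m
    ≤ (l.ascFactorial (m+1) : ℝ) * Real.exp 1 ^ (m+1) := by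
  have h2 : l.ascFactorial (m+1) = l * (l+1).ascFactorial m := by
    rw [Nat.ascFactorial_succ, ← Nat.succ_ascFactorial]
  have h1 : l * (l+(m+1))^m * m.factorial ≤ l.ascFactorial (m+1) * (m+1)^m := by
    calc l * (l+(m+1))^m * m.factorial = l * ((l+m+1)^m * m.factorial) := by ring_nf
      _ ≤ l * ((l+1).ascFactorial m * (m+1)^m) := Nat.mul_le_mul_left l (key_nat l m)
      _ = l.ascFactorial (m+1) * (m+1)^m := by rw [h2]; ring
  have h1' : (l:ℝ) * ((l:ℝ)+(m+1:ℕ))^m * m.factorial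
      ≤ (l.ascFactorial (m+1) : ℝ) * ((m+1:ℕ):ℝ)^m := by
    exact_mod_cast Nat.cast_le.mpr h1
  have h3 : ((m+1:ℕ):ℝ)^m / m.factorial ≤ Real.exp 1 ^ (m+1) := by
    have := pow_div_fact_le_exp (m+1)
    have heq : ((m+1:ℕ):ℝ) ^ (m+1) / (m+1).factorial = ((m+1:ℕ):ℝ)^m / m.factorial := by
      rw [pow_succ, Nat.factorial_succ]
      push_cast
      rw [mul_comm ((m:ℝ)+1)]
      rw [mul_div_mul_right]
      positivity
    rwa [heq] at this
  have hfm : (0:ℝ) < m.factorial := by positivity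
  have hasc : (0:ℝ) ≤ (l.ascFactorial (m+1) : ℝ) := Nat.cast_nonneg _
  calc (l:ℝ) * ((l:ℝ) + (m+1:ℕ)) ^ m
      = ((l:ℝ) * ((l:ℝ)+(m+1:ℕ))^m * m.factorial) / m.factorial := by
        field_simp
    _ ≤ ((l.ascFactorial (m+1) : ℝ) * ((m+1:ℕ):ℝ)^m) / m.factorial := by
        gcongr
    _ = (l.ascFactorial (m+1) : ℝ) * (((m+1:ℕ):ℝ)^m / m.factorial) := by ring
    _ ≤ (l.ascFactorial (m+1) : ℝ) * Real.exp 1 ^ (m+1) := by gcongr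

theorem stmt_10 (h ν₁ : ℝ) (hh : 0 < h) (hν : 0 < ν₁)
    (hq : h * ν₁ * Real.exp 1 < 1) (l : ℕ) (hl : 0 < l) :
    ∑' n : ℕ, (h * ν₁) ^ n * ((l : ℝ) * ((l : ℝ) + n) ^ ((n : ℤ) - 1)) / n.factorial
      ≤ (1 - h * ν₁ * Real.exp 1)⁻¹ ^ l := by
  set q : ℝ := h * ν₁ * Real.exp 1 with hqdef
  have hq0 : 0 < q := by positivity
  obtain ⟨k, hk⟩ : ∃ k, l = k + 1 := ⟨l - 1, by omega⟩
  set f : ℕ → ℝ := fun n => (h * ν₁) ^ n * ((l : ℝ) * ((l : ℝ) + n) ^ ((n : ℤ) - 1)) / n.factorial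
  set g : ℕ → ℝ := fun n => ((n + k).choose k : ℝ) * q ^ n
  have hsum : HasSum g ((1 - q)⁻¹ ^ l) := by
    have := hasSum_choose_mul_geometric_of_norm_lt_one (𝕜 := ℝ) k
      (r := q) (by rw [Real.norm_eq_abs, abs_of_pos hq0]; exact hq)
    rw [hk, inv_pow, ← one_div]
    exact this
  have hfg : ∀ n, f n ≤ g n := by
    intro n
    match n with
    | 0 =>
      have hl' : (l:ℝ) ≠ 0 := Nat.cast_ne_zero.mpr hl.ne'
      show (h*ν₁)^0 * ((l:ℝ) * ((l:ℝ) + ((0:ℕ):ℝ)) ^ (((0:ℕ):ℤ) - 1)) / (0:ℕ).factorial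
          ≤ ((0+k).choose k : ℝ) * q ^ 0
      norm_num [zpow_neg_one, mul_inv_cancel₀ hl']
    | m + 1 =>
      have hz : ((l : ℝ) + (m+1:ℕ)) ^ (((m+1:ℕ) : ℤ) - 1) = ((l : ℝ) + (m+1:ℕ)) ^ m := by
        rw [show ((m+1:ℕ):ℤ) - 1 = (m:ℤ) by push_cast; ring, zpow_natCast]
      have hC : ((m+1).factorial : ℝ) * ((m+1+k).choose k : ℝ) = (l.ascFactorial (m+1) : ℝ) := by
        have := Nat.ascFactorial_eq_factorial_mul_choose k (m+1)
        have hsymm : (k + (m+1)).choose (m+1) = (m+1+k).choose k := by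
          rw [Nat.add_comm k (m+1)]
          have h2 := Nat.choose_symm (n := m+1+k) (k := m+1) (by omega)
          simpa [show m+1+k-(m+1) = k by omega] using h2.symm
        rw [hk]
        exact_mod_cast (by rw [this, hsymm] : (k+1).ascFactorial (m+1)
          = (m+1).factorial * ((m+1+k).choose k)).symm
      have hkey := key_real l m
      have hfact : (0:ℝ) < (m+1).factorial := by positivity
      have hpow : (0:ℝ) < (h * ν₁) ^ (m+1) := by positivity
      show (h * ν₁) ^ (m+1) * ((l : ℝ) * ((l : ℝ) + (m+1:ℕ)) ^ (((m+1:ℕ):ℤ) - 1))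
          / (m+1).factorial ≤ ((m+1+k).choose k : ℝ) * q ^ (m+1)
      rw [hz]
      calc (h * ν₁) ^ (m+1) * ((l : ℝ) * ((l : ℝ) + (m+1:ℕ)) ^ m) / (m+1).factorial
          ≤ (h * ν₁) ^ (m+1) * ((l.ascFactorial (m+1) : ℝ) * Real.exp 1 ^ (m+1))
            / (m+1).factorial := by gcongr
        _ = ((m+1+k).choose k : ℝ) * q ^ (m+1) := by
            have hE : q ^ (m+1) = (h*ν₁)^(m+1) * Real.exp 1 ^ (m+1) := by
              rw [hqdef, mul_pow]
            rw [← hC, hE, div_eq_iff hfact.ne']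
            ring
  have hf0 : ∀ n, 0 ≤ f n := by
    intro n
    have : (0:ℝ) < (l : ℝ) + n := by
      have : (0:ℝ) < (l:ℝ) := Nat.cast_pos.mpr hl
      positivity
    have hz : (0:ℝ) ≤ ((l : ℝ) + n) ^ ((n : ℤ) - 1) := zpow_nonneg this.le _
    have : (0:ℝ) ≤ (l:ℝ) := Nat.cast_nonneg l
    positivity
  have hfs : Summable f := Summable.of_nonneg_of_le hf0 hfg hsum.summable
  calc ∑' n, f n ≤ ∑' n, g n := Summable.tsum_le_tsum hfg hfs hsum.summable
    _ = (1 - q)⁻¹ ^ l := hsum.tsum_eq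
end
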